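/- arXiv:2306.02065 — 2 statements merged into one kernel-verified Lean document; each statement's English description precedes it below -/
import Mathlib

section
/- Every near-bipartite finite simple undirected graph with girth at least 5 is sc-orientable. That is, if V(G) can be partitioned into sets I and F such that I is an independent set and the induced subgraph G[F] is a forest, and every cycle of G has length at least 5, then G is sc-orientable. -/
/-!
A near-bipartite graph is 3-colourable: one colour for `I`, two for the forest `G[F]`.
Orient every edge towards its larger colour. Colours strictly increase along directed paths,
so a directed path has at most two arcs, and two distinct directed `s`–`t` paths would close
a triangle or a 4-cycle, which girth at least 5 rules out.
-/

/-- An orientation of a simple graph `G`: each edge `{u,v}` receives exactly one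
direction, yielding a directed graph with arc relation `arc`. -/
structure EdgeOrientation {V : Type*} (G : SimpleGraph V) where
  arc : V → V → Prop
  adj_iff : ∀ u v, G.Adj u v ↔ (arc u v ∨ arc v u)
  asymm : ∀ u v, arc u v → ¬ arc v u

/-- `p` is a directed path in the digraph `D`: a nonempty list of pairwise
distinct vertices in which consecutive vertices are joined by arcs of `D`. -/
def IsDipath {V : Type*} (D : V → V → Prop) (p : List V) : Prop :=
  p ≠ [] ∧ p.Chain' D ∧ p.Nodup

/-- `p` is a directed path from `s` to `t` in the digraph `D`. -/
def IsDipathFromTo {V : Type*} (D : V → V → Prop) (s t : V) (p : List V) : Prop :=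
  IsDipath D p ∧ p.head? = some s ∧ p.getLast? = some t

/-- A digraph `D` is singly connected if for every ordered pair `(s,t)` there is
at most one directed path from `s` to `t`. -/
def SinglyConnected {V : Type*} (D : V → V → Prop) : Prop :=
  ∀ s t p q, IsDipathFromTo D s t p → IsDipathFromTo D s t q → p = q

/-- An orientation is an sc-orientation if the resulting digraph is singly connected. -/
def IsSCOrientation {V : Type*} {G : SimpleGraph V} (σ : EdgeOrientation G) : Prop :=
  SinglyConnected σ.arc

/-- A graph is sc-orientable if it admits an sc-orientation. -/
def SCOrientable {V : Type*} (G : SimpleGraph V) : Prop :=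
  ∃ σ : EdgeOrientation G, IsSCOrientation σ

namespace SimpleGraph

variable {V : Type*} {G : SimpleGraph V} {a b c d : V}

lemma not_adj_of_adj_of_adj_of_four_le_egirth (h : 4 ≤ G.egirth) (hab : G.Adj a b)
    (hbc : G.Adj b c) : ¬ G.Adj a c := by
  intro hac
  have hcycle : (Walk.cons hab (Walk.cons hbc (Walk.cons hac.symm Walk.nil))).IsCycle := by
    simp [Walk.isCycle_def, hab.ne, hbc.ne, hac.ne, hab.ne', hac.ne']
  have := h.trans (G.egirth_le_length hcycle)
  norm_num at this

lemma eq_of_adj_of_adj_of_five_le_egirth (h : 5 ≤ G.egirth) (hac : a ≠ c) (hab : G.Adj a b)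
    (hbc : G.Adj b c) (had : G.Adj a d) (hdc : G.Adj d c) : b = d := by
  by_contra hbd
  have hcycle : (Walk.cons hab (Walk.cons hbc (Walk.cons hdc.symm
      (Walk.cons had.symm Walk.nil)))).IsCycle := by
    simp [Walk.isCycle_def, hab.ne, hbc.ne, had.ne, hab.ne', hdc.ne', had.ne', hac, hbd,
      Ne.symm hac]
  have := h.trans (G.egirth_le_length hcycle)
  norm_num at this

lemma colorable_succ_of_colorable_induce {n : ℕ} {I F : Set V} (hunion : I ∪ F = Set.univ)
    (hindep : ∀ a ∈ I, ∀ b ∈ I, ¬ G.Adj a b) (hF : (G.induce F).Colorable n) :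
    G.Colorable (n + 1) := by
  classical
  obtain ⟨C⟩ := hF
  have hmemF : ∀ x, x ∉ I → x ∈ F := fun x hx =>
    (hunion ▸ Set.mem_univ x : x ∈ I ∪ F).resolve_left hx
  refine ⟨Coloring.mk (fun x => if hx : x ∈ I then Fin.last n else (C ⟨x, hmemF x hx⟩).castSucc)
    fun {x y} hxy => ?_⟩
  by_cases hx : x ∈ I <;> by_cases hy : y ∈ I <;> simp only [hx, hy, dite_true, dite_false]
  · exact absurd hxy (hindep x hx y hy)
  · exact (Fin.castSucc_lt_last _).ne'
  · exact (Fin.castSucc_lt_last _).ne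
  · exact Fin.castSucc_injective n |>.ne (C.valid hxy)

end SimpleGraph

section Dipath

variable {V : Type*} {D : V → V → Prop} {s t : V} {p : List V}

lemma IsDipath.length_le_card {α : Type*} [Preorder α] [Fintype α] {f : V → α}
    (hf : ∀ x y, D x y → f x < f y) (hp : IsDipath D p) : p.length ≤ Fintype.card α := by
  have hsorted : (p.map f).Pairwise (· < ·) :=
    List.isChain_iff_pairwise.mp ((List.isChain_map f).mpr (hp.2.1.imp hf))
  simpa using hsorted.nodup.length_le_card

lemma IsDipathFromTo.eq_singleton (hp : IsDipathFromTo D s s p) : p = [s] := by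
  obtain ⟨⟨-, -, hnodup⟩, hhead, hlast⟩ := hp
  obtain ⟨l, rfl⟩ : ∃ l, p = s :: l := ⟨p.tail, List.eq_cons_of_mem_head? hhead⟩
  cases l with
  | nil => rfl
  | cons x l =>
    have : s ∈ x :: l := List.mem_of_getLast? (by simpa using hlast)
    exact absurd this (List.nodup_cons.mp hnodup).1

lemma IsDipathFromTo.eq_pair_or_eq_triple (hp : IsDipathFromTo D s t p) (hst : s ≠ t)
    (hlen : p.length ≤ 3) :
    (p = [s, t] ∧ D s t) ∨ ∃ m, p = [s, m, t] ∧ D s m ∧ D m t := by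
  obtain ⟨⟨hne, hchain : p.IsChain D, -⟩, hhead, hlast⟩ := hp
  rcases p with _ | ⟨a, _ | ⟨b, _ | ⟨c, _ | ⟨d, l⟩⟩⟩⟩
  · exact absurd rfl hne
  · simp_all
  · simp_all [List.isChain_cons_cons]
  · simp_all [List.isChain_cons_cons]
  · simp only [List.length_cons] at hlen; omega

lemma singlyConnected_of_length_le_three (hlen : ∀ s t p, IsDipathFromTo D s t p → p.length ≤ 3)
    (htri : ∀ a b c, D a b → D b c → ¬ D a c)
    (hsq : ∀ a b c d, a ≠ c → D a b → D b c → D a d → D d c → b = d) : SinglyConnected D := by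
  intro s t p q hp hq
  rcases eq_or_ne s t with rfl | hst
  · rw [hp.eq_singleton, hq.eq_singleton]
  rcases hp.eq_pair_or_eq_triple hst (hlen _ _ _ hp) with ⟨rfl, hst'⟩ | ⟨m, rfl, hsm, hmt⟩ <;>
    rcases hq.eq_pair_or_eq_triple hst (hlen _ _ _ hq) with ⟨rfl, hst''⟩ | ⟨m', rfl, hsm', hm't⟩
  · rfl
  · exact absurd hst' (htri _ _ _ hsm' hm't)
  · exact absurd hst'' (htri _ _ _ hsm hmt)
  · rw [hsq _ _ _ _ hst hsm hmt hsm' hm't]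

end Dipath

namespace EdgeOrientation

variable {V : Type*} {G : SimpleGraph V}

def ofColoring {α : Type*} [LinearOrder α] (C : G.Coloring α) : EdgeOrientation G where
  arc x y := G.Adj x y ∧ C x < C y
  adj_iff _ _ := ⟨fun h => (C.valid h).lt_or_gt.imp (⟨h, ·⟩) (⟨h.symm, ·⟩),
    by rintro (⟨h, -⟩ | ⟨h, -⟩); exacts [h, h.symm]⟩
  asymm _ _ h h' := h.2.asymm h'.2

lemma isSCOrientation_ofColoring (C : G.Coloring (Fin 3)) (h : 5 ≤ G.egirth) :
    IsSCOrientation (ofColoring C) :=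
  singlyConnected_of_length_le_three
    (fun _ _ _ hp => by simpa using hp.1.length_le_card (f := C) fun _ _ => And.right)
    (fun _ _ _ hab hbc hac => G.not_adj_of_adj_of_adj_of_four_le_egirth
      (le_trans (by norm_num) h) hab.1 hbc.1 hac.1)
    (fun _ _ _ _ hac hab hbc had hdc => G.eq_of_adj_of_adj_of_five_le_egirth h hac
      hab.1 hbc.1 had.1 hdc.1)

end EdgeOrientation

theorem scOrientable_of_colorable_three_of_five_le_egirth {V : Type*} {G : SimpleGraph V}
    (hC : G.Colorable 3) (h : 5 ≤ G.egirth) : SCOrientable G :=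
  let ⟨C⟩ := hC
  ⟨_, EdgeOrientation.isSCOrientation_ofColoring C h⟩

theorem scOrientable_of_nearBipartite_of_girth_ge_five_general
    {V : Type*} (G : SimpleGraph V) (I F : Set V)
    (hunion : I ∪ F = Set.univ)
    (hindep : ∀ a ∈ I, ∀ b ∈ I, ¬ G.Adj a b)
    (hforest : (SimpleGraph.induce F G).IsAcyclic)
    (hgirth : 5 ≤ G.egirth) :
    SCOrientable G :=
  scOrientable_of_colorable_three_of_five_le_egirth
    (G.colorable_succ_of_colorable_induce hunion hindep hforest.colorable_two) hgirth

/-- Every near-bipartite finite graph with girth at least 5 is sc-orientable: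
if `V(G)` partitions into an independent set `I` and a set `F` inducing a
forest, and every cycle of `G` has length at least 5, then `G` is
sc-orientable. -/
theorem scOrientable_of_nearBipartite_of_girth_ge_five
    {V : Type*} [Fintype V] (G : SimpleGraph V) (I F : Set V)
    (hunion : I ∪ F = Set.univ) (hdisj : Disjoint I F)
    (hindep : ∀ a ∈ I, ∀ b ∈ I, ¬ G.Adj a b)
    (hforest : (SimpleGraph.induce F G).IsAcyclic)
    (hgirth : 5 ≤ G.egirth) :
    SCOrientable G :=
  scOrientable_of_nearBipartite_of_girth_ge_five_general G I F hunion hindep hforest hgirth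
end

section
/- Let G be a finite simple undirected graph such that every 2-vertex-connected component (block) of G is bipartite or a triangle. Then G is sc-orientable. -/
/-- A subgraph `H` of `G` is 2-vertex-connected: it is connected and remains
connected after the deletion of any single vertex. -/
def TwoVertexConnected {V : Type*} {G : SimpleGraph V} (H : G.Subgraph) : Prop :=
  H.Connected ∧ ∀ v ∈ H.verts, (H.deleteVerts {v}).Connected

/-- A block of `G`: a maximal 2-vertex-connected subgraph of `G`. -/
def IsBlock {V : Type*} {G : SimpleGraph V} (H : G.Subgraph) : Prop :=
  TwoVertexConnected H ∧ ∀ K : G.Subgraph, TwoVertexConnected K → H ≤ K → K = H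

/-- The subgraph `H` is a triangle: its vertex set consists of three distinct
mutually adjacent vertices. -/
def IsTriangleSubgraph {V : Type*} {G : SimpleGraph V} (H : G.Subgraph) : Prop :=
  ∃ a b c : V, a ≠ b ∧ a ≠ c ∧ b ≠ c ∧ H.verts = {a, b, c} ∧
    H.Adj a b ∧ H.Adj b c ∧ H.Adj a c

/-!
Induction on the (finite) lattice of subgraphs of `G`. If the non-isolated vertices of `G` form a
2-connected graph, that graph is a block: a bipartite one is oriented from one colour class to the
other, so no directed path has two arcs, and a triangle is oriented cyclically, so every vertex has
out-degree one; either way directed paths are unique. Otherwise a vertex `c` splits `G` into two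
edge-disjoint proper subgraphs meeting only in `c`, whose blocks are blocks of `G`. A directed path
of their union can only switch sides at `c`, which it visits at most once, so it is a path of one
side or a path into `c` followed by a path out of `c`; uniqueness therefore passes to the union.
-/

open SimpleGraph

section

variable {V : Type*}

namespace IsDipathFromTo

variable {D : V → V → Prop} {s t : V} {p : List V}

theorem eq_singleton_s13 (hp : IsDipathFromTo D s s p) : p = [s] := by
  obtain ⟨⟨hne, -, hnd⟩, hs, hs'⟩ := hp
  rcases p with _ | ⟨x, _ | ⟨y, r⟩⟩
  · exact absurd rfl hne
  · simpa using hs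
  · obtain rfl : x = s := by simpa using hs
    rw [List.getLast?_cons_cons] at hs'
    exact absurd (List.mem_of_getLast? hs') (List.nodup_cons.1 hnd).1

theorem of_cons_cons {x y : V} {r : List V} (hp : IsDipathFromTo D s t (x :: y :: r)) :
    x = s ∧ D s y ∧ IsDipathFromTo D y t (y :: r) := by
  obtain ⟨⟨-, hch, hnd⟩, hs, ht⟩ := hp
  obtain rfl : x = s := by simpa using hs
  obtain ⟨hxy, hch⟩ := List.isChain_cons_cons.1 hch
  rw [List.getLast?_cons_cons] at ht
  exact ⟨rfl, hxy, ⟨List.cons_ne_nil _ _, hch, hnd.of_cons⟩, rfl, ht⟩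

theorem eq_pair (hD : ∀ a b c, D a b → ¬ D b c) (hst : s ≠ t)
    (hp : IsDipathFromTo D s t p) : p = [s, t] := by
  rcases p with _ | ⟨x, _ | ⟨y, _ | ⟨z, r⟩⟩⟩
  · exact absurd rfl hp.1.1
  · obtain ⟨-, hs, ht⟩ := hp
    simp only [List.head?_cons, List.getLast?_singleton, Option.some.injEq] at hs ht
    exact absurd (hs.symm.trans ht) hst
  · obtain ⟨rfl, -, -, -, ht⟩ := hp.of_cons_cons
    simp_all
  · obtain ⟨-, hsy, hyz⟩ := hp.of_cons_cons
    exact absurd hyz.of_cons_cons.2.1 (hD _ _ _ hsy)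

theorem split {c : V} {p₁ p₂ : List V} (hp : IsDipathFromTo D s t (p₁ ++ c :: p₂)) :
    IsDipathFromTo D s c (p₁ ++ [c]) ∧ IsDipathFromTo D c t (c :: p₂) := by
  obtain ⟨⟨-, hch, hnd⟩, hs, ht⟩ := hp
  have hpre : p₁ ++ [c] <+: p₁ ++ c :: p₂ := by simp
  have hsuf : c :: p₂ <:+ p₁ ++ c :: p₂ := List.suffix_append _ _
  refine ⟨⟨⟨by simp, hch.prefix hpre, hnd.sublist hpre.sublist⟩, ?_, by simp⟩,
    ⟨⟨by simp, hch.suffix hsuf, hnd.sublist hsuf.sublist⟩, rfl, ?_⟩⟩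
  · cases p₁ <;> simpa using hs
  · simpa [List.getLast?_append_cons] using ht

end IsDipathFromTo

theorem singlyConnected_of_forall_not_rel_rel {D : V → V → Prop}
    (hD : ∀ a b c, D a b → ¬ D b c) : SinglyConnected D := by
  intro s t p q hp hq
  by_cases hst : s = t
  · subst hst
    rw [hp.eq_singleton_s13, hq.eq_singleton_s13]
  · rw [hp.eq_pair hD hst, hq.eq_pair hD hst]

theorem singlyConnected_of_rightUnique {D : V → V → Prop} (hD : Relator.RightUnique D) :
    SinglyConnected D := by
  intro s t p
  induction p generalizing s with
  | nil => exact fun q hp => absurd rfl hp.1.1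
  | cons x p ih =>
    intro q hp hq
    rcases p with _ | ⟨y, p⟩
    · obtain ⟨-, hs, ht⟩ := hp
      simp only [List.head?_cons, List.getLast?_singleton, Option.some.injEq] at hs ht
      subst hs ht
      exact hq.eq_singleton_s13.symm
    obtain ⟨rfl, hxy, hyt⟩ := hp.of_cons_cons
    rcases q with _ | ⟨x', _ | ⟨z, q⟩⟩
    · exact absurd rfl hq.1.1
    · obtain ⟨-, hs, ht⟩ := hq
      simp only [List.head?_cons, List.getLast?_singleton, Option.some.injEq] at hs ht
      subst hs ht
      simpa using hp.eq_singleton_s13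
    · obtain ⟨rfl, hxz, hzt⟩ := hq.of_cons_cons
      obtain rfl := hD hxy hxz
      rw [ih _ _ hyt hzt]

structure SeparatedAt (D₁ D₂ : V → V → Prop) (A₁ A₂ : Set V) (c : V) : Prop where
  rel_left : ∀ ⦃x y⦄, D₁ x y → x ∈ A₁ ∧ y ∈ A₁
  rel_right : ∀ ⦃x y⦄, D₂ x y → x ∈ A₂ ∧ y ∈ A₂
  inter_eq : A₁ ∩ A₂ = {c}

namespace SeparatedAt

variable {D₁ D₂ : V → V → Prop} {A₁ A₂ : Set V} {c s t : V} {p q : List V}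

theorem symm (h : SeparatedAt D₁ D₂ A₁ A₂ c) : SeparatedAt D₂ D₁ A₂ A₁ c :=
  ⟨h.rel_right, h.rel_left, Set.inter_comm A₂ A₁ ▸ h.inter_eq⟩

theorem eq_of_mem_of_mem {x : V} (h : SeparatedAt D₁ D₂ A₁ A₂ c) (h₁ : x ∈ A₁)
    (h₂ : x ∈ A₂) : x = c := by
  have hx : x ∈ A₁ ∩ A₂ := ⟨h₁, h₂⟩
  rwa [h.inter_eq] at hx

theorem mem_left (h : SeparatedAt D₁ D₂ A₁ A₂ c) : c ∈ A₁ :=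
  (h.inter_eq.symm ▸ rfl : c ∈ A₁ ∩ A₂).1

theorem mem_right (h : SeparatedAt D₁ D₂ A₁ A₂ c) : c ∈ A₂ :=
  h.symm.mem_left

theorem mem_iff_of_rel {x y : V} (h : SeparatedAt D₁ D₂ A₁ A₂ c) (hxy : (D₁ ⊔ D₂) x y)
    (hx : x ≠ c) (hy : y ≠ c) : x ∈ A₁ ↔ y ∈ A₁ := by
  rcases hxy with hxy | hxy
  · exact iff_of_true (h.rel_left hxy).1 (h.rel_left hxy).2
  · exact iff_of_false (fun hx₁ => hx (h.eq_of_mem_of_mem hx₁ (h.rel_right hxy).1))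
      (fun hy₁ => hy (h.eq_of_mem_of_mem hy₁ (h.rel_right hxy).2))

theorem mem_iff_of_isChain {a x : V} {l : List V} (h : SeparatedAt D₁ D₂ A₁ A₂ c)
    (hl : (a :: l).IsChain (D₁ ⊔ D₂)) (hc : c ∉ a :: l) (hx : x ∈ a :: l) :
    x ∈ A₁ ↔ a ∈ A₁ := by
  have hl' : (a :: l).IsChain fun x y => (D₁ ⊔ D₂) x y ∧ x ≠ c ∧ y ≠ c :=
    hl.imp_of_mem_imp fun x y hx hy hxy => ⟨hxy, ne_of_mem_of_not_mem hx hc,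
      ne_of_mem_of_not_mem hy hc⟩
  exact hl'.induction (fun x => x ∈ A₁ ↔ a ∈ A₁) _
    (fun x y ⟨hxy, hx, hy⟩ hxa => (h.mem_iff_of_rel hxy hx hy).symm.trans hxa)
    (fun _ => Iff.rfl) x hx

theorem isChain_left {l : List V} (h : SeparatedAt D₁ D₂ A₁ A₂ c)
    (hl : l.IsChain (D₁ ⊔ D₂)) (hnd : l.Nodup) (hs : l.head? = some s)
    (ht : l.getLast? = some t) (hs₁ : s ∈ A₁) (ht₁ : t ∈ A₁) : l.IsChain D₁ := by
  induction l generalizing s with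
  | nil => exact .nil
  | cons x l ih =>
    obtain rfl : x = s := by simpa using hs
    rcases l with _ | ⟨y, r⟩
    · exact .singleton x
    obtain ⟨hxy, hl⟩ := List.isChain_cons_cons.1 hl
    rw [List.getLast?_cons_cons] at ht
    rcases hxy with hxy | hxy
    · exact List.isChain_cons_cons.2
        ⟨hxy, ih hl hnd.of_cons rfl ht (h.rel_left hxy).2⟩
    · -- an arc of `D₂` leaving `A₁` starts at `c`; the rest of the path avoids `c`, so it
      -- cannot come back to `t ∈ A₁`
      obtain rfl := h.eq_of_mem_of_mem hs₁ (h.rel_right hxy).1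
      have hcy := (List.nodup_cons.1 hnd).1
      have hy₁ : y ∉ A₁ := fun hy₁ =>
        hcy (h.eq_of_mem_of_mem hy₁ (h.rel_right hxy).2 ▸ List.mem_cons_self)
      exact absurd ((h.mem_iff_of_isChain hl hcy (List.mem_of_getLast? ht)).1 ht₁) hy₁

theorem dipath_eq_of_mem_left (h : SeparatedAt D₁ D₂ A₁ A₂ c) (h₁ : SinglyConnected D₁)
    (hp : IsDipathFromTo (D₁ ⊔ D₂) s t p) (hq : IsDipathFromTo (D₁ ⊔ D₂) s t q)
    (hs : s ∈ A₁) (ht : t ∈ A₁) : p = q :=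
  have restrict {r : List V} (hr : IsDipathFromTo (D₁ ⊔ D₂) s t r) :
      IsDipathFromTo D₁ s t r :=
    ⟨⟨hr.1.1, h.isChain_left hr.1.2.1 hr.1.2.2 hr.2.1 hr.2.2 hs ht, hr.1.2.2⟩, hr.2⟩
  h₁ s t p q (restrict hp) (restrict hq)

theorem mem_of_isDipathFromTo (h : SeparatedAt D₁ D₂ A₁ A₂ c)
    (hp : IsDipathFromTo (D₁ ⊔ D₂) s t p) (hs : s ∈ A₁) (ht : t ∉ A₁) : c ∈ p := by
  obtain ⟨⟨-, hch, -⟩, hs', ht'⟩ := hp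
  obtain ⟨l, rfl⟩ := List.head?_eq_some_iff.1 hs'
  by_contra hc
  exact ht ((h.mem_iff_of_isChain hch hc (List.mem_of_getLast? ht')).2 hs)

theorem dipath_eq_of_mem_left_of_mem_right (h : SeparatedAt D₁ D₂ A₁ A₂ c)
    (h₁ : SinglyConnected D₁) (h₂ : SinglyConnected D₂)
    (hp : IsDipathFromTo (D₁ ⊔ D₂) s t p) (hq : IsDipathFromTo (D₁ ⊔ D₂) s t q)
    (hs : s ∈ A₁) (ht₂ : t ∈ A₂) (ht₁ : t ∉ A₁) : p = q := by
  obtain ⟨p₁, p₂, rfl⟩ := List.append_of_mem (h.mem_of_isDipathFromTo hp hs ht₁)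
  obtain ⟨q₁, q₂, rfl⟩ := List.append_of_mem (h.mem_of_isDipathFromTo hq hs ht₁)
  obtain ⟨hp₁, hp₂⟩ := hp.split
  obtain ⟨hq₁, hq₂⟩ := hq.split
  rw [sup_comm] at hp₂ hq₂
  have e₁ := h.dipath_eq_of_mem_left h₁ hp₁ hq₁ hs h.mem_left
  have e₂ := h.symm.dipath_eq_of_mem_left h₂ hp₂ hq₂ h.mem_right ht₂
  rw [List.append_cancel_right e₁, List.cons.inj e₂ |>.2]

end SeparatedAt

theorem SinglyConnected.sup {D₁ D₂ : V → V → Prop} {A₁ A₂ : Set V} {c : V}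
    (h : SeparatedAt D₁ D₂ A₁ A₂ c) (hcover : A₁ ∪ A₂ = Set.univ)
    (h₁ : SinglyConnected D₁) (h₂ : SinglyConnected D₂) :
    SinglyConnected (D₁ ⊔ D₂) := by
  intro s t p q hp hq
  have hs : s ∈ A₁ ∪ A₂ := hcover ▸ Set.mem_univ s
  have ht : t ∈ A₁ ∪ A₂ := hcover ▸ Set.mem_univ t
  by_cases hs₁ : s ∈ A₁ <;> by_cases ht₁ : t ∈ A₁
  · exact h.dipath_eq_of_mem_left h₁ hp hq hs₁ ht₁
  · exact h.dipath_eq_of_mem_left_of_mem_right h₁ h₂ hp hq hs₁ (ht.resolve_left ht₁) ht₁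
  all_goals
    rw [sup_comm] at hp hq
    have hs₂ := hs.resolve_left hs₁
    by_cases ht₂ : t ∈ A₂
    · exact h.symm.dipath_eq_of_mem_left h₂ hp hq hs₂ ht₂
    · exact h.symm.dipath_eq_of_mem_left_of_mem_right h₂ h₁ hp hq hs₂
        (ht.resolve_right ht₂) ht₂

namespace EdgeOrientation

variable {G G₁ G₂ : SimpleGraph V}

theorem adj_of_arc (σ : EdgeOrientation G) {x y : V} (h : σ.arc x y) : G.Adj x y :=
  (σ.adj_iff x y).2 (Or.inl h)

theorem mem_of_arc (σ : EdgeOrientation G) {A : Set V} (hA : G.support ⊆ A) {x y : V}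
    (h : σ.arc x y) : x ∈ A ∧ y ∈ A :=
  ⟨hA (σ.adj_of_arc h).mem_support_left, hA (σ.adj_of_arc h).symm.mem_support_left⟩

def sup (σ₁ : EdgeOrientation G₁) (σ₂ : EdgeOrientation G₂) (hdisj : Disjoint G₁ G₂) :
    EdgeOrientation (G₁ ⊔ G₂) where
  arc := σ₁.arc ⊔ σ₂.arc
  adj_iff u v := by
    simp only [sup_adj, σ₁.adj_iff, σ₂.adj_iff, Pi.sup_apply, sup_Prop_eq]
    tauto
  asymm u v := by
    have hdisj' {x y : V} (h₁ : G₁.Adj x y) (h₂ : G₂.Adj x y) : False :=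
      (hdisj.le_bot ⟨h₁, h₂⟩ : (⊥ : SimpleGraph V).Adj x y)
    rintro (huv | huv) (hvu | hvu)
    · exact σ₁.asymm u v huv hvu
    · exact hdisj' (σ₁.adj_of_arc huv) (σ₂.adj_of_arc hvu).symm
    · exact hdisj' (σ₁.adj_of_arc hvu) (σ₂.adj_of_arc huv).symm
    · exact σ₂.asymm u v huv hvu

end EdgeOrientation

theorem SCOrientable.sup {G₁ G₂ : SimpleGraph V} {A₁ A₂ : Set V} {c : V}
    (h₁ : SCOrientable G₁) (h₂ : SCOrientable G₂) (hA₁ : G₁.support ⊆ A₁)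
    (hA₂ : G₂.support ⊆ A₂) (hA : A₁ ∩ A₂ = {c}) (hcover : A₁ ∪ A₂ = Set.univ) :
    SCOrientable (G₁ ⊔ G₂) := by
  obtain ⟨σ₁, hσ₁⟩ := h₁
  obtain ⟨σ₂, hσ₂⟩ := h₂
  have hsep : SeparatedAt σ₁.arc σ₂.arc A₁ A₂ c :=
    ⟨fun _ _ h => σ₁.mem_of_arc hA₁ h, fun _ _ h => σ₂.mem_of_arc hA₂ h, hA⟩
  have hdisj : Disjoint G₁ G₂ := by
    rw [disjoint_iff_inf_le]
    rintro x y ⟨h₁, h₂⟩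
    have hx := hsep.eq_of_mem_of_mem (hA₁ h₁.mem_support_left) (hA₂ h₂.mem_support_left)
    have hy :=
      hsep.eq_of_mem_of_mem (hA₁ h₁.symm.mem_support_left) (hA₂ h₂.symm.mem_support_left)
    exact h₁.ne (hx.trans hy.symm)
  exact ⟨σ₁.sup σ₂ hdisj, hσ₁.sup hsep hcover hσ₂⟩

theorem scOrientable_of_colorable_two {G : SimpleGraph V} (hG : G.Colorable 2) :
    SCOrientable G := by
  obtain ⟨C⟩ := hG
  have hC (a b : Fin 2) (h : a ≠ b) : (a = 0 ∧ b = 1) ∨ (b = 0 ∧ a = 1) := by omega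
  refine ⟨⟨fun x y => G.Adj x y ∧ C x = 0 ∧ C y = 1,
    fun u v => ⟨fun h => ?_, ?_⟩, ?_⟩, ?_⟩
  · rcases hC _ _ (C.valid h) with hc | hc
    exacts [.inl ⟨h, hc⟩, .inr ⟨h.symm, hc⟩]
  · rintro (⟨h, -⟩ | ⟨h, -⟩)
    exacts [h, h.symm]
  · rintro u v ⟨-, hu, -⟩ ⟨-, -, hu'⟩
    exact zero_ne_one (hu.symm.trans hu')
  · exact singlyConnected_of_forall_not_rel_rel fun a b c ⟨_, _, hb⟩ ⟨_, hb', _⟩ =>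
      zero_ne_one (hb'.symm.trans hb)

theorem scOrientable_of_injOn_support {G : SimpleGraph V} (f : V → ZMod 3)
    (hf : Set.InjOn f G.support) : SCOrientable G := by
  -- the only possible out-neighbour of `x` is the support vertex with value `f x + 1`
  have hcyc (a b : ZMod 3) (h : a ≠ b) : b = a + 1 ∨ a = b + 1 := by revert a b; decide
  have hasymm (a b : ZMod 3) (h : b = a + 1) : a ≠ b + 1 := by revert a b; decide
  refine ⟨⟨fun x y => G.Adj x y ∧ f y = f x + 1,
    fun u v => ⟨fun h => ?_, ?_⟩, ?_⟩, ?_⟩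
  · rcases hcyc _ _ (hf.ne h.mem_support_left h.symm.mem_support_left h.ne) with hc | hc
    exacts [.inl ⟨h, hc⟩, .inr ⟨h.symm, hc⟩]
  · rintro (⟨h, -⟩ | ⟨h, -⟩)
    exacts [h, h.symm]
  · rintro u v ⟨-, huv⟩ ⟨-, hvu⟩
    exact hasymm _ _ huv hvu
  · exact singlyConnected_of_rightUnique fun x y z ⟨hxy, hy⟩ ⟨hxz, hz⟩ =>
      hf hxy.symm.mem_support_left hxz.symm.mem_support_left (hy.trans hz.symm)

theorem scOrientable_of_support_subset {G : SimpleGraph V} (a b c : V)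
    (h : G.support ⊆ {a, b, c}) : SCOrientable G := by
  classical
  refine scOrientable_of_injOn_support (fun x => if x = a then 0 else if x = b then 1 else 2)
    (Set.InjOn.mono h ?_)
  intro x hx y hy hxy
  simp only [Set.mem_insert_iff, Set.mem_singleton_iff] at hx hy hxy
  split_ifs at hxy <;> first | exact absurd hxy (by decide) | simp_all

def SimpleGraph.supportSubgraph (G : SimpleGraph V) : G.Subgraph where
  verts := G.support
  Adj := G.Adj
  adj_sub := id
  edge_vert h := h.mem_support_left
  symm := G.symm

def SimpleGraph.Subgraph.ofLE {G₁ G : SimpleGraph V} (h : G₁ ≤ G) (B : G₁.Subgraph) :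
    G.Subgraph :=
  { B with adj_sub := fun hxy => h (B.adj_sub hxy) }

def BlocksBipartiteOrTriangle (G : SimpleGraph V) : Prop :=
  ∀ H : G.Subgraph, IsBlock H → H.coe.Colorable 2 ∨ IsTriangleSubgraph H

def SimpleGraph.CutsOff (G : SimpleGraph V) (c : V) (A : Set V) : Prop :=
  ∀ x y, G.Adj x y → x ≠ c → y ≠ c → (x ∈ A ↔ y ∈ A)

theorem SimpleGraph.CutsOff.insert {G : SimpleGraph V} {c : V} {A : Set V} (h : G.CutsOff c A) :
    G.CutsOff c (insert c A) :=
  fun x y hxy hx hy => by simpa [hx, hy] using h x y hxy hx hy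

theorem SimpleGraph.CutsOff.compl {G : SimpleGraph V} {c : V} {A : Set V} (h : G.CutsOff c A) :
    G.CutsOff c Aᶜ :=
  fun x y hxy hx hy => not_congr (h x y hxy hx hy)

theorem SimpleGraph.spanningCoe_induce_adj {G : SimpleGraph V} {A : Set V} {x y : V} :
    (G.induce A).spanningCoe.Adj x y ↔ G.Adj x y ∧ x ∈ A ∧ y ∈ A := by
  simp

namespace TwoVertexConnected

variable {G : SimpleGraph V} {K : G.Subgraph}

theorem exists_adj (hK : TwoVertexConnected K) {v : V} (hv : v ∈ K.verts) :
    ∃ w, K.Adj v w := by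
  obtain ⟨w, hw, hwv⟩ := (hK.2 v hv).nonempty
  have : Nontrivial K.verts :=
    nontrivial_of_ne ⟨v, hv⟩ ⟨w, hw⟩ (by simpa [eq_comm] using hwv)
  exact hK.1.preconnected.exists_adj_of_nontrivial ⟨v, hv⟩

theorem ofLE_iff {G₁ : SimpleGraph V} (h : G₁ ≤ G) {B : G₁.Subgraph} :
    TwoVertexConnected (B.ofLE h) ↔ TwoVertexConnected B :=
  ⟨fun ⟨h₁, h₂⟩ => ⟨⟨h₁.coe⟩, fun v hv => ⟨(h₂ v hv).coe⟩⟩,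
   fun ⟨h₁, h₂⟩ => ⟨⟨h₁.coe⟩, fun v hv => ⟨(h₂ v hv).coe⟩⟩⟩

theorem verts_subset {A : Set V} {c z : V} (hK : TwoVertexConnected K) (hc : c ∈ A)
    (hA : G.CutsOff c A)
    (hz : z ∈ K.verts) (hzA : z ∈ A) (hzc : z ≠ c) : K.verts ⊆ A := by
  intro u hu
  by_cases huc : u = c
  · exact huc ▸ hc
  have hpre : (K.deleteVerts {c}).Preconnected := by
    by_cases hcK : c ∈ K.verts
    · exact (hK.2 c hcK).preconnected
    · rw [← Subgraph.deleteVerts_inter_verts_set_right_eq,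
        Set.singleton_inter_eq_empty.2 hcK, Subgraph.deleteVerts_empty]
      exact hK.1.preconnected
  obtain ⟨w⟩ := hpre ⟨u, hu, huc⟩ ⟨z, hz, hzc⟩
  suffices ∀ {x y : (K.deleteVerts {c}).verts}, (K.deleteVerts {c}).coe.Walk x y →
      ((x : V) ∈ A ↔ (y : V) ∈ A) from (this w).2 hzA
  intro x y w
  induction w with
  | nil => rfl
  | cons hxy _ ih =>
    obtain ⟨-, hx, -, hy, hxy⟩ := Subgraph.deleteVerts_adj.1 hxy
    exact (hA _ _ (K.adj_sub hxy) hx hy).trans ih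

end TwoVertexConnected

theorem isBlock_supportSubgraph {G : SimpleGraph V}
    (h : TwoVertexConnected G.supportSubgraph) : IsBlock G.supportSubgraph := by
  refine ⟨h, fun K hK hle => le_antisymm ?_ hle⟩
  refine ⟨fun v hv => ?_, fun _ _ hxy => K.adj_sub hxy⟩
  obtain ⟨w, hvw⟩ := hK.exists_adj hv
  exact (K.adj_sub hvw).mem_support_left

theorem IsBlock.ofLE {G₁ G : SimpleGraph V} (h : G₁ ≤ G) {B : G₁.Subgraph} (hB : IsBlock B)
    (hK : ∀ K : G.Subgraph, TwoVertexConnected K → B.ofLE h ≤ K →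
      ∀ ⦃x y⦄, K.Adj x y → G₁.Adj x y) :
    IsBlock (B.ofLE h) := by
  refine ⟨(TwoVertexConnected.ofLE_iff h).2 hB.1, fun K hK₂ hle => ?_⟩
  let K' : G₁.Subgraph := { K with adj_sub := fun hxy => hK K hK₂ hle hxy }
  exact congrArg (Subgraph.ofLE h) (hB.2 K' ((TwoVertexConnected.ofLE_iff h).1 hK₂) hle)

theorem BlocksBipartiteOrTriangle.induce {G : SimpleGraph V} {A : Set V} {c : V}
    (hG : BlocksBipartiteOrTriangle G) (hc : c ∈ A)
    (hA : G.CutsOff c A) :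
    BlocksBipartiteOrTriangle (G.induce A).spanningCoe := by
  intro B hB
  refine hG _ (hB.ofLE (spanningCoe_induce_le G A) fun K hK hle x y hxy => ?_)
  obtain ⟨v, hv⟩ := hB.1.1.nonempty
  obtain ⟨w, hvw⟩ := hB.1.exists_adj hv
  obtain ⟨hvw', hvA, hwA⟩ := spanningCoe_induce_adj.1 (B.adj_sub hvw)
  obtain ⟨z, hz, hzA, hzc⟩ : ∃ z ∈ B.verts, z ∈ A ∧ z ≠ c := by
    by_cases hvc : v = c
    · exact ⟨w, B.edge_vert hvw.symm, hwA, hvc ▸ hvw'.ne.symm⟩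
    · exact ⟨v, hv, hvA, hvc⟩
  have hKA := hK.verts_subset hc hA (hle.1 hz) hzA hzc
  exact spanningCoe_induce_adj.2
    ⟨K.adj_sub hxy, hKA (K.edge_vert hxy), hKA (K.edge_vert hxy.symm)⟩

theorem scOrientable_of_supportSubgraph {G : SimpleGraph V}
    (h : G.supportSubgraph.coe.Colorable 2 ∨ IsTriangleSubgraph G.supportSubgraph) :
    SCOrientable G := by
  classical
  rcases h with hC | ⟨a, b, c, -, -, -, hverts, -⟩
  · obtain ⟨C⟩ := hC
    refine scOrientable_of_colorable_two
      ⟨Coloring.mk (fun v => if hv : v ∈ G.support then C ⟨v, hv⟩ else 0)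
        fun {v w} hvw => ?_⟩
    simpa [hvw.mem_support_left, hvw.symm.mem_support_left] using
      C.valid (v := ⟨v, hvw.mem_support_left⟩) (w := ⟨w, hvw.symm.mem_support_left⟩) hvw
  · exact scOrientable_of_support_subset a b c hverts.subset

theorem exists_not_reachable_deleteVerts {G : SimpleGraph V} (hG : G ≠ ⊥)
    (h : ¬ TwoVertexConnected G.supportSubgraph) :
    ∃ c, ∃ x w : (G.supportSubgraph.deleteVerts {c}).verts,
      ¬ (G.supportSubgraph.deleteVerts {c}).coe.Reachable x w := by
  obtain ⟨a, b, hab⟩ := ne_bot_iff_exists_adj.1 hG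
  by_cases hH : G.supportSubgraph.Connected
  · obtain ⟨c, -, hnc⟩ :
        ∃ c ∈ G.support, ¬ (G.supportSubgraph.deleteVerts {c}).Connected := by
      by_contra! hall
      exact h ⟨hH, hall⟩
    have hne : (G.supportSubgraph.deleteVerts {c}).verts.Nonempty := by
      by_cases hac : a = c
      · exact ⟨b, hab.symm.mem_support_left, fun hbc => hab.ne (hac.trans hbc.symm)⟩
      · exact ⟨a, hab.mem_support_left, hac⟩
    simp only [Subgraph.connected_iff, Subgraph.preconnected_iff, hne, and_true,
      Preconnected, not_forall] at hnc
    exact ⟨c, hnc⟩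
  · -- delete a vertex `y` outside the component of `x`: its neighbour `w` stays cut off from `x`
    simp only [Subgraph.connected_iff, Subgraph.preconnected_iff,
      show G.supportSubgraph.verts.Nonempty from ⟨a, hab.mem_support_left⟩, and_true,
      Preconnected, not_forall] at hH
    obtain ⟨x, y, hxy⟩ := hH
    obtain ⟨w, hyw⟩ := y.2
    refine ⟨y, ⟨x, x.2, fun hx => hxy (Subtype.ext hx ▸ .refl _)⟩,
      ⟨w, hyw.symm.mem_support_left, hyw.ne.symm⟩, fun hr => hxy ?_⟩
    exact (hr.map (Subgraph.inclusion Subgraph.deleteVerts_le)).trans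
      (Adj.reachable (G := G.supportSubgraph.coe) (u := ⟨w, hyw.symm.mem_support_left⟩)
        hyw.symm)

theorem exists_separation {G : SimpleGraph V} (hG : G ≠ ⊥)
    (h : ¬ TwoVertexConnected G.supportSubgraph) :
    ∃ c S, c ∉ S ∧ G.CutsOff c S ∧
      ¬ G.support ⊆ Sᶜ ∧ ¬ G.support ⊆ insert c S := by
  obtain ⟨c, x, w, hxw⟩ := exists_not_reachable_deleteVerts hG h
  let H := G.supportSubgraph.deleteVerts {c}
  refine ⟨c, {z | ∃ hz : z ∈ H.verts, H.coe.Reachable x ⟨z, hz⟩}, ?_, ?_, ?_, ?_⟩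
  · rintro ⟨hc, -⟩
    exact hc.2 rfl
  · intro p q hpq hp hq
    have hadj :
        H.coe.Adj ⟨p, hpq.mem_support_left, hp⟩ ⟨q, hpq.symm.mem_support_left, hq⟩ :=
      Subgraph.deleteVerts_adj.2 ⟨hpq.mem_support_left, hp, hpq.symm.mem_support_left, hq, hpq⟩
    exact ⟨fun ⟨_, hr⟩ => ⟨_, hr.trans hadj.reachable⟩,
      fun ⟨_, hr⟩ => ⟨_, hr.trans hadj.symm.reachable⟩⟩
  · exact fun hsub => hsub x.2.1 ⟨x.2, .refl _⟩
  · intro hsub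
    obtain hwc | ⟨_, hr⟩ := hsub w.2.1
    exacts [w.2.2 hwc, hxw hr]

theorem scOrientable_of_separation {G : SimpleGraph V} {S : Set V} {c : V} (hcS : c ∉ S)
    (hS : G.CutsOff c S)
    (h₁ : SCOrientable (G.induce (insert c S)).spanningCoe)
    (h₂ : SCOrientable (G.induce Sᶜ).spanningCoe) : SCOrientable G := by
  have hG : (G.induce (insert c S)).spanningCoe ⊔ (G.induce Sᶜ).spanningCoe = G := by
    ext x y
    simp only [sup_adj, spanningCoe_induce_adj, Set.mem_insert_iff, Set.mem_compl_iff]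
    have := hS x y
    have := G.ne_of_adj (a := x) (b := y)
    grind
  rw [← hG]
  refine h₁.sup (c := c) h₂ (fun x ⟨_, h⟩ => (spanningCoe_induce_adj.1 h).2.1)
    (fun x ⟨_, h⟩ => (spanningCoe_induce_adj.1 h).2.1) ?_ ?_ <;> ext x <;> simp <;> grind

theorem spanningCoe_induce_lt {G : SimpleGraph V} {A : Set V} (h : ¬ G.support ⊆ A) :
    (G.induce A).spanningCoe < G :=
  lt_of_le_of_ne (spanningCoe_induce_le G A) (mt (G.spanningCoe_induce_eq_self A).1 h)

end

/-- If every block (maximal 2-vertex-connected subgraph) of a finite graph `G`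
is bipartite or a triangle, then `G` is sc-orientable. -/
theorem scOrientable_of_blocks_bipartite_or_triangle
    {V : Type*} [Fintype V] (G : SimpleGraph V)
    (hblocks : ∀ H : G.Subgraph, IsBlock H →
      (H.coe.Colorable 2 ∨ IsTriangleSubgraph H)) :
    SCOrientable G := by
  induction G using WellFoundedLT.induction with
  | _ G ih =>
  by_cases hbot : G = ⊥
  · subst hbot
    exact scOrientable_of_colorable_two ⟨Coloring.mk (fun _ => 0) fun h => h.elim⟩
  by_cases h2 : TwoVertexConnected G.supportSubgraph
  · exact scOrientable_of_supportSubgraph (hblocks _ (isBlock_supportSubgraph h2))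
  obtain ⟨c, S, hcS, hS, hS₁, hS₂⟩ := exists_separation hbot h2
  exact scOrientable_of_separation hcS hS
    (ih _ (spanningCoe_induce_lt hS₂)
      (BlocksBipartiteOrTriangle.induce hblocks (Set.mem_insert c S) hS.insert))
    (ih _ (spanningCoe_induce_lt hS₁) (BlocksBipartiteOrTriangle.induce hblocks hcS hS.compl))
end
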